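/- arXiv:2012.11098 — 2 statements merged into one kernel-verified Lean document; each statement's English description precedes it below -/
import Mathlib

section
/- Let x, q ∈ ℝ^d with ‖q‖ = 1 and x ≠ 0, and set ρ := ⟨x,q⟩/‖x‖. Let D ≥ 1, let Q_1,…,Q_D be i.i.d. N(0,1) random variables and ε_1,…,ε_D be i.i.d. N(0, ‖x‖²(1−ρ²)) random variables, all jointly independent, and set X_i := ⟨x,q⟩·Q_i + ε_i (so each pair (Q_i, X_i) is bivariate normal with means 0, variances 1 and ‖x‖², and correlation ρ). Let Q_(1) := max(Q_1,…,Q_D) be the first order statistic and X_[1] its concomitant. Then E[X_[1]] = ⟨x,q⟩ · E[Q_(1)] and Var[X_[1]] = ‖x‖² + ⟨x,q⟩² · ( Var[Q_(1)] − 1 ). -/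
open MeasureTheory ProbabilityTheory Set Function
open scoped RealInnerProductSpace

/-!
Almost surely the `Qᵢ` have no ties, so the event `{J = i}` coincides a.s. with the event that
`Qᵢ` is the largest coordinate of `F = (Q₁, …, Q_D)`. Each `εᵢ` is independent of `F` and all
`εᵢ` share one law, so the selected noise `ε_J` is again independent of `F`, with that same law.
Hence `Q_J`, a.s. the maximum of the coordinates of `F`, is independent of the centred `ε_J` of
variance `‖x‖²(1 - ρ²) = ‖x‖² - ⟪x, q⟫²`, and the mean and variance of
`X_J = ⟪x, q⟫ Q_J + ε_J` follow by linearity and additivity of variance.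
-/

section Selection

variable {Ω ι E α : Type*} [MeasurableSpace Ω] [MeasurableSpace E] [MeasurableSpace α]
  {P : Measure Ω}

lemma measure_eq_sum_measure_fiber_inter [Fintype ι] [MeasurableSpace ι]
    [MeasurableSingletonClass ι] {J : Ω → ι} (hJ : Measurable J) (s : Set Ω) :
    P s = ∑ i, P (J ⁻¹' {i} ∩ s) := by
  have h := sum_measure_preimage_singleton (μ := P.restrict s) Finset.univ
    fun i _ => hJ (measurableSet_singleton i)
  simpa [Measure.restrict_apply (hJ (measurableSet_singleton _))] using h.symm

lemma measurable_comp_index [Countable ι] [MeasurableSpace ι] [MeasurableSingletonClass ι]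
    {J : Ω → ι} (hJ : Measurable J) {g : ι → Ω → α} (hg : ∀ i, Measurable (g i)) :
    Measurable fun ω => g (J ω) ω :=
  (measurable_from_prod_countable_left (f := fun p : Ω × ι => g p.2 p.1) hg).comp
    (measurable_id.prodMk hJ)

lemma memLp_comp_index [Fintype ι] [MeasurableSpace ι] [MeasurableSingletonClass ι]
    {G : Type*} [NormedAddCommGroup G] {p : ENNReal} {J : Ω → ι} (hJ : Measurable J)
    {g : ι → Ω → G} (hg : ∀ i, MemLp (g i) p P) :
    MemLp (fun ω => g (J ω) ω) p P := by
  have hsum : (fun ω => g (J ω) ω) = ∑ i, (J ⁻¹' {i}).indicator (g i) := by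
    ext ω
    rw [Finset.sum_apply,
      Finset.sum_eq_single (f := fun i => (J ⁻¹' {i}).indicator (g i) ω) (J ω)
      (fun i _ hi => indicator_of_notMem (show ω ∉ J ⁻¹' {i} from Ne.symm hi) _)
      (fun h => absurd (Finset.mem_univ _) h)]
    exact (indicator_of_mem (show ω ∈ J ⁻¹' {J ω} from rfl) _).symm
  rw [hsum]
  exact memLp_finsetSum' _ fun i _ => (hg i).indicator (hJ (measurableSet_singleton i))

variable {F : Ω → E} {J : Ω → ι} {C : ι → Set E} {ε : ι → Ω → α} {ν : Measure α}

lemma measure_fiber_inter_preimage_comp_index (hC : ∀ i, MeasurableSet (C i))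
    (hJC : ∀ i, J ⁻¹' {i} =ᵐ[P] F ⁻¹' C i) (hind : ∀ i, IndepFun F (ε i) P)
    (hε : ∀ i, Measurable (ε i)) (hlaw : ∀ i, HasLaw (ε i) ν P) (i : ι) {A : Set E} {B : Set α}
    (hA : MeasurableSet A) (hB : MeasurableSet B) :
    P (J ⁻¹' {i} ∩ (F ⁻¹' A ∩ (fun ω => ε (J ω) ω) ⁻¹' B))
      = P (J ⁻¹' {i} ∩ F ⁻¹' A) * ν B := by
  have hfiber : J ⁻¹' {i} ∩ (F ⁻¹' A ∩ (fun ω => ε (J ω) ω) ⁻¹' B)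
      = J ⁻¹' {i} ∩ F ⁻¹' A ∩ ε i ⁻¹' B := by
    ext ω
    simp +contextual [and_assoc]
  have hcell : (J ⁻¹' {i} ∩ F ⁻¹' A : Set Ω) =ᵐ[P] (F ⁻¹' (C i ∩ A) : Set Ω) :=
    ae_eq_set_inter (hJC i) (ae_eq_refl _)
  rw [hfiber, measure_congr (ae_eq_set_inter hcell (ae_eq_refl (ε i ⁻¹' B))),
    measure_congr hcell,
    (indepFun_iff_measure_inter_preimage_eq_mul.mp (hind i)) _ _ ((hC i).inter hA) hB,
    ← (hlaw i).map_eq, Measure.map_apply (hε i) hB]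

theorem indepFun_and_hasLaw_comp_index [Fintype ι] [MeasurableSpace ι]
    [MeasurableSingletonClass ι] [IsProbabilityMeasure P] (hJ : Measurable J)
    (hC : ∀ i, MeasurableSet (C i)) (hJC : ∀ i, J ⁻¹' {i} =ᵐ[P] F ⁻¹' C i)
    (hε : ∀ i, Measurable (ε i)) (hind : ∀ i, IndepFun F (ε i) P)
    (hlaw : ∀ i, HasLaw (ε i) ν P) :
    IndepFun F (fun ω => ε (J ω) ω) P ∧ HasLaw (fun ω => ε (J ω) ω) ν P := by
  have hrect : ∀ A B, MeasurableSet A → MeasurableSet B →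
      P (F ⁻¹' A ∩ (fun ω => ε (J ω) ω) ⁻¹' B) = P (F ⁻¹' A) * ν B := by
    intro A B hA hB
    rw [measure_eq_sum_measure_fiber_inter hJ, measure_eq_sum_measure_fiber_inter hJ (F ⁻¹' A),
      Finset.sum_mul]
    exact Finset.sum_congr rfl fun i _ =>
      measure_fiber_inter_preimage_comp_index hC hJC hind hε hlaw i hA hB
  have hεJ := measurable_comp_index hJ hε
  have hlawJ : HasLaw (fun ω => ε (J ω) ω) ν P := by
    refine ⟨hεJ.aemeasurable, Measure.ext fun B hB => ?_⟩
    simpa [Measure.map_apply hεJ hB] using hrect univ B MeasurableSet.univ hB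
  refine ⟨indepFun_iff_measure_inter_preimage_eq_mul.mpr fun A B hA hB => ?_, hlawJ⟩
  rw [hrect A B hA hB, ← hlawJ.map_eq, Measure.map_apply hεJ hB]

end Selection

section NoTies

variable {Ω ι α : Type*} [MeasurableSpace Ω] [MeasurableSpace α] {P : Measure Ω}

lemma ProbabilityTheory.IndepFun.ae_ne [IsFiniteMeasure P] [MeasurableEq α] {X Y : Ω → α}
    (hXY : IndepFun X Y P) (hX : Measurable X) (hY : Measurable Y)
    [NullSingletonClass (P.map Y)] : ∀ᵐ ω ∂P, X ω ≠ Y ω := by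
  have hmap : P.map (fun ω => (X ω, Y ω)) = (P.map X).prod (P.map Y) :=
    (indepFun_iff_map_prod_eq_prod_map_map hX.aemeasurable hY.aemeasurable).mp hXY
  have hslice : ∀ a, Prod.mk a ⁻¹' diagonal α = {a} := fun a => by ext; simp [eq_comm]
  rw [ae_iff]
  simp only [ne_eq, not_not]
  change P ((fun ω => (X ω, Y ω)) ⁻¹' diagonal α) = 0
  rw [← Measure.map_apply (hX.prodMk hY) measurableSet_diagonal, hmap,
    Measure.prod_apply measurableSet_diagonal]
  simp [hslice]

lemma ProbabilityTheory.iIndepFun.ae_injective [IsFiniteMeasure P] [Countable ι] [MeasurableEq α]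
    {X : ι → Ω → α} (h : iIndepFun X P) (hX : ∀ i, Measurable (X i))
    (hnull : ∀ i, NullSingletonClass (P.map (X i))) : ∀ᵐ ω ∂P, Injective fun i => X i ω := by
  have hne : ∀ i j, ∀ᵐ ω ∂P, X i ω = X j ω → i = j := fun i j => by
    by_cases hij : i = j
    · exact Filter.Eventually.of_forall fun _ _ => hij
    · have := hnull j
      filter_upwards [(h.indepFun hij).ae_ne (hX i) (hX j)] with ω hω heq
      exact absurd heq hω
  filter_upwards [ae_all_iff.mpr fun i => ae_all_iff.mpr (hne i)] with ω hω i j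
  exact hω i j

end NoTies

lemma ciSup_eq_of_forall_le_apply {ι α : Type*} [ConditionallyCompleteLattice α] {f : ι → α}
    {k : ι} (hk : ∀ j, f j ≤ f k) : ⨆ j, f j = f k :=
  haveI : Nonempty ι := ⟨k⟩
  (IsGreatest.isLUB ⟨mem_range_self k, forall_mem_range.mpr hk⟩).ciSup_eq

lemma eq_iff_forall_le_of_injective {ι α : Type*} [PartialOrder α] {y : ι → α} (hy : Injective y)
    {k : ι} (hk : ∀ j, y j ≤ y k) (i : ι) : k = i ↔ ∀ j, y j ≤ y i :=
  ⟨by rintro rfl; exact hk, fun hi => hy (le_antisymm (hi k) (hk i))⟩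

lemma measurableSet_forall_apply_le {ι : Type*} [Countable ι] (i : ι) :
    MeasurableSet {y : ι → ℝ | ∀ j, y j ≤ y i} := by
  simp only [ofPred_forall]
  exact .iInter fun j => measurableSet_le (measurable_pi_apply j) (measurable_pi_apply i)

lemma ProbabilityTheory.HasLaw.memLp_gaussianReal {Ω : Type*} [MeasurableSpace Ω]
    {P : Measure Ω} {X : Ω → ℝ} {μ : ℝ} {v : NNReal} (hX : HasLaw X (gaussianReal μ v) P)
    (p : NNReal) : MemLp X p P :=
  (memLp_map_measure_iff aestronglyMeasurable_id hX.aemeasurable).mp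
    (hX.map_eq ▸ memLp_id_gaussianReal p)

lemma ProbabilityTheory.iIndepFun.indepFun_pi_sumElim_inr {Ω ι κ β : Type*} [MeasurableSpace Ω]
    [MeasurableSpace β] {P : Measure Ω} [Fintype ι] {f : ι → Ω → β} {g : κ → Ω → β}
    (h : iIndepFun (Sum.elim f g) P)
    (hf : ∀ i, Measurable (f i)) (hg : ∀ k, Measurable (g k)) (k : κ) :
    IndepFun (fun ω i => f i ω) (g k) P := by
  classical
  have hmeas : ∀ l, Measurable (Sum.elim f g l) := Sum.forall.mpr ⟨hf, hg⟩
  have h' := h.indepFun_finset (Finset.univ.map .inl) {.inr k} (by simp) hmeas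
  exact h'.comp (measurable_pi_lambda _ fun i => measurable_pi_apply ⟨.inl i, by simp⟩)
    (measurable_pi_apply ⟨.inr k, by simp⟩)

lemma coe_toNNReal_norm_sq_mul_one_sub_sq_inner_div_norm {E : Type*} [NormedAddCommGroup E]
    [InnerProductSpace ℝ E] {x q : E} (hx : x ≠ 0) (hq : ‖q‖ = 1) :
    ((‖x‖ ^ 2 * (1 - (⟪x, q⟫ / ‖x‖) ^ 2)).toNNReal : ℝ) = ‖x‖ ^ 2 - ⟪x, q⟫ ^ 2 := by
  have hxn : ‖x‖ ≠ 0 := norm_ne_zero_iff.mpr hx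
  have hinner : ⟪x, q⟫ ^ 2 ≤ ‖x‖ ^ 2 :=
    sq_le_sq.mpr (by simpa [hq] using abs_real_inner_le_norm x q)
  have hexpand : ‖x‖ ^ 2 * (1 - (⟪x, q⟫ / ‖x‖) ^ 2) = ‖x‖ ^ 2 - ⟪x, q⟫ ^ 2 := by field_simp
  rw [hexpand, Real.coe_toNNReal _ (sub_nonneg.mpr hinner)]

theorem concomitant_of_maximum_mean_variance_general
    {Ω : Type*} [MeasurableSpace Ω] (P : Measure Ω) [IsProbabilityMeasure P]
    {d : ℕ} (x q : EuclideanSpace ℝ (Fin d)) (hq : ‖q‖ = 1) (hx : x ≠ 0)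
    (ρ : ℝ) (hρ : ρ = ⟪x, q⟫ / ‖x‖)
    (D : ℕ) (Q ε : Fin D → Ω → ℝ)
    (hQmeas : ∀ i, Measurable (Q i)) (hεmeas : ∀ i, Measurable (ε i))
    (hQlaw : ∀ i, P.map (Q i) = gaussianReal 0 1)
    (hεlaw : ∀ i, P.map (ε i) = gaussianReal 0 (Real.toNNReal (‖x‖ ^ 2 * (1 - ρ ^ 2))))
    (hindep : iIndepFun (Sum.elim Q ε) P)
    (X : Fin D → Ω → ℝ) (hX : ∀ i, X i = fun ω => ⟪x, q⟫ * Q i ω + ε i ω)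
    (J : Ω → Fin D) (hJmeas : Measurable J)
    (hJ : ∀ᵐ ω ∂P, ∀ i, Q i ω ≤ Q (J ω) ω) :
    (∫ ω, X (J ω) ω ∂P) = ⟪x, q⟫ * ∫ ω, Q (J ω) ω ∂P ∧
      variance (fun ω => X (J ω) ω) P
        = ‖x‖ ^ 2 + ⟪x, q⟫ ^ 2 * (variance (fun ω => Q (J ω) ω) P - 1) := by
  set F : Ω → Fin D → ℝ := fun ω i => Q i ω
  have hinj : ∀ᵐ ω ∂P, Injective fun i => Q i ω :=
    (hindep.precomp Sum.inl_injective).ae_injective hQmeas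
      fun i => hQlaw i ▸ nullSingletonClass_gaussianReal one_ne_zero
  have hcell : ∀ i, J ⁻¹' {i} =ᵐ[P] F ⁻¹' {y | ∀ j, y j ≤ y i} := fun i => by
    filter_upwards [hinj, hJ] with ω hω hωJ
    exact propext (eq_iff_forall_le_of_injective hω hωJ i)
  obtain ⟨hFε, hεJ⟩ := indepFun_and_hasLaw_comp_index hJmeas measurableSet_forall_apply_le hcell
    hεmeas (hindep.indepFun_pi_sumElim_inr hQmeas hεmeas)
    fun i => ⟨(hεmeas i).aemeasurable, hεlaw i⟩
  have hQJ : (fun ω => Q (J ω) ω) =ᵐ[P] fun ω => ⨆ i, F ω i := by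
    filter_upwards [hJ] with ω hωJ
    exact (ciSup_eq_of_forall_le_apply hωJ).symm
  have hQεJ : IndepFun (fun ω => Q (J ω) ω) (fun ω => ε (J ω) ω) P :=
    (hFε.comp (Measurable.iSup measurable_pi_apply) measurable_id).congr hQJ.symm
      Filter.EventuallyEq.rfl
  have hQJmem : MemLp (fun ω => Q (J ω) ω) 2 P :=
    memLp_comp_index hJmeas fun i =>
      HasLaw.memLp_gaussianReal ⟨(hQmeas i).aemeasurable, hQlaw i⟩ 2
  have hXJ : (fun ω => X (J ω) ω) = fun ω => ⟪x, q⟫ * Q (J ω) ω + ε (J ω) ω := by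
    ext ω
    rw [hX]
  rw [hXJ]
  constructor
  · rw [integral_add ((hQJmem.integrable one_le_two).const_mul _)
      (memLp_one_iff_integrable.mp (hεJ.memLp_gaussianReal 1)),
      integral_const_mul, hεJ.integral_eq, integral_id_gaussianReal, add_zero]
  · rw [(hQεJ.comp (measurable_const_mul _) measurable_id).variance_fun_add (hQJmem.const_mul _)
      (hεJ.memLp_gaussianReal 2), variance_const_mul, hεJ.variance_eq, variance_id_gaussianReal,
      hρ, coe_toNNReal_norm_sq_mul_one_sub_sq_inner_div_norm hx hq]
    ring

/-- Lemma 5 of the paper: moments of the concomitant of the maximum.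
With `Qᵢ` i.i.d. `N(0,1)`, independent noise `εᵢ ~ N(0, ‖x‖²(1-ρ²))` where
`ρ = ⟪x,q⟫/‖x‖`, and `Xᵢ = ⟪x,q⟫ Qᵢ + εᵢ`, the concomitant `X_[1]` of the maximum
`Q_(1)` (selected by an a.s. argmax index `J`) satisfies
`E[X_[1]] = ⟪x,q⟫ E[Q_(1)]` and `Var[X_[1]] = ‖x‖² + ⟪x,q⟫² (Var[Q_(1)] - 1)`. -/
theorem concomitant_of_maximum_mean_variance
    {Ω : Type*} [MeasurableSpace Ω] (P : Measure Ω) [IsProbabilityMeasure P]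
    {d : ℕ} (x q : EuclideanSpace ℝ (Fin d)) (hq : ‖q‖ = 1) (hx : x ≠ 0)
    (ρ : ℝ) (hρ : ρ = ⟪x, q⟫ / ‖x‖)
    (D : ℕ) (hD : 1 ≤ D) (Q ε : Fin D → Ω → ℝ)
    (hQmeas : ∀ i, Measurable (Q i)) (hεmeas : ∀ i, Measurable (ε i))
    (hQlaw : ∀ i, P.map (Q i) = gaussianReal 0 1)
    (hεlaw : ∀ i, P.map (ε i) = gaussianReal 0 (Real.toNNReal (‖x‖ ^ 2 * (1 - ρ ^ 2))))
    (hindep : iIndepFun (Sum.elim Q ε) P)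
    (X : Fin D → Ω → ℝ) (hX : ∀ i, X i = fun ω => ⟪x, q⟫ * Q i ω + ε i ω)
    (J : Ω → Fin D) (hJmeas : Measurable J)
    (hJ : ∀ᵐ ω ∂P, ∀ i, Q i ω ≤ Q (J ω) ω) :
    (∫ ω, X (J ω) ω ∂P) = ⟪x, q⟫ * ∫ ω, Q (J ω) ω ∂P ∧
      variance (fun ω => X (J ω) ω) P
        = ‖x‖ ^ 2 + ⟪x, q⟫ ^ 2 * (variance (fun ω => Q (J ω) ω) P - 1) :=
  concomitant_of_maximum_mean_variance_general P x q hq hx ρ hρ D Q ε hQmeas hεmeas hQlaw hεlaw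
    hindep X hX J hJmeas hJ
end

section
/- Let r and ε be positive reals with (1+ε)·r < 2, set τ_1 := 1 − r²/2, τ_2 := 1 − (1+ε)²·r²/2, and let α := (τ_1 − τ_2)/( √(1 − τ_1²) + √(1 − τ_2²) ). Then ε / √(4/r² − 1) ≤ α ≤ ε / √(4/r² − (1+ε)²). -/
open Real

/-! With `s = (1 + ε) r`, the identity `√(1 - (1 - d²/2)²) = (d/2) √(4 - d²)` turns `α` into
`(s² - r²) / (r √(4 - r²) + s √(4 - s²))`, while the two bounds are `(s - r) / √(4 - r²)` and
`(s - r) / √(4 - s²)`. Dividing numerator and denominator of `α` by `r + s` exhibits `α` as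
`s - r` over a weighted mean of `√(4 - s²) ≤ √(4 - r²)`. -/

theorem sqrt_one_sub_sq_one_sub_sq_div_two {d : ℝ} (hd : 0 ≤ d) :
    √(1 - (1 - d ^ 2 / 2) ^ 2) = d / 2 * √(4 - d ^ 2) := by
  rw [show 1 - (1 - d ^ 2 / 2) ^ 2 = (d / 2) ^ 2 * (4 - d ^ 2) by ring,
    sqrt_mul (by positivity), sqrt_sq (by positivity)]

theorem sqrt_four_div_sq_sub_sq {r : ℝ} (hr : 0 < r) (c : ℝ) :
    √(4 / r ^ 2 - c ^ 2) = √(4 - (c * r) ^ 2) / r := by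
  rw [show 4 / r ^ 2 - c ^ 2 = (4 - (c * r) ^ 2) / r ^ 2 by field_simp,
    sqrt_div' _ (by positivity), sqrt_sq hr.le]

section
variable {r s A B : ℝ}

theorem div_le_sq_sub_sq_div (hr : 0 < r) (hrs : r ≤ s) (hB : 0 ≤ B) (hBA : B ≤ A)
    (hA : 0 < A) :
    (s - r) / A ≤ (s ^ 2 - r ^ 2) / (r * A + s * B) := by
  have : 0 < r * A + s * B := by nlinarith
  rw [div_le_div_iff₀ hA this]
  nlinarith [mul_nonneg (sub_nonneg.2 hrs) (sub_nonneg.2 hBA)]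

theorem sq_sub_sq_div_le_div (hr : 0 < r) (hrs : r ≤ s) (hB : 0 < B) (hBA : B ≤ A) :
    (s ^ 2 - r ^ 2) / (r * A + s * B) ≤ (s - r) / B := by
  have : 0 < r * A + s * B := by nlinarith
  rw [div_le_div_iff₀ this hB]
  nlinarith [mul_nonneg (sub_nonneg.2 hrs) (mul_nonneg hr.le (sub_nonneg.2 hBA))]

end

/-- two-sided bound `α = Θ(ε)` for the gap parameter in the
`(1+ε)`-approximate near neighbor problem on the unit sphere: with
`τ₁ = 1 - r²/2`, `τ₂ = 1 - (1+ε)² r²/2` and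
`α = (τ₁ - τ₂)/(√(1-τ₁²) + √(1-τ₂²))`, one has
`ε/√(4/r² - 1) ≤ α ≤ ε/√(4/r² - (1+ε)²)`. -/
theorem gap_parameter_two_sided_bound
    (r ε : ℝ) (hr : 0 < r) (hε : 0 < ε) (h : (1 + ε) * r < 2)
    (τ₁ τ₂ α : ℝ) (hτ₁ : τ₁ = 1 - r ^ 2 / 2) (hτ₂ : τ₂ = 1 - (1 + ε) ^ 2 * r ^ 2 / 2)
    (hα : α = (τ₁ - τ₂) / (Real.sqrt (1 - τ₁ ^ 2) + Real.sqrt (1 - τ₂ ^ 2))) :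
    ε / Real.sqrt (4 / r ^ 2 - 1) ≤ α ∧
      α ≤ ε / Real.sqrt (4 / r ^ 2 - (1 + ε) ^ 2) := by
  obtain ⟨s, hs⟩ : ∃ s, (1 + ε) * r = s := ⟨_, rfl⟩
  have hεr : ε * r = s - r := by linarith
  have hrs : r ≤ s := by nlinarith
  have hB : 0 < √(4 - s ^ 2) := sqrt_pos.2 (by nlinarith)
  have hBA : √(4 - s ^ 2) ≤ √(4 - r ^ 2) := sqrt_le_sqrt (by nlinarith)
  have hα' : α = (s ^ 2 - r ^ 2) / (r * √(4 - r ^ 2) + s * √(4 - s ^ 2)) := by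
    rw [hα, hτ₁, hτ₂, ← mul_pow, hs, sqrt_one_sub_sq_one_sub_sq_div_two hr.le,
      sqrt_one_sub_sq_one_sub_sq_div_two (hr.le.trans hrs),
      show r / 2 * √(4 - r ^ 2) + s / 2 * √(4 - s ^ 2)
        = (r * √(4 - r ^ 2) + s * √(4 - s ^ 2)) / 2 by ring,
      show 1 - r ^ 2 / 2 - (1 - s ^ 2 / 2) = (s ^ 2 - r ^ 2) / 2 by ring,
      div_div_div_cancel_right₀ two_ne_zero]
  have hlower : ε / √(4 / r ^ 2 - 1) = (s - r) / √(4 - r ^ 2) := by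
    have hsqrt := sqrt_four_div_sq_sub_sq hr 1
    rw [one_pow, one_mul] at hsqrt
    rw [hsqrt, div_div_eq_mul_div, hεr]
  have hupper : ε / √(4 / r ^ 2 - (1 + ε) ^ 2) = (s - r) / √(4 - s ^ 2) := by
    rw [sqrt_four_div_sq_sub_sq hr, hs, div_div_eq_mul_div, hεr]
  rw [hα', hlower, hupper]
  exact ⟨div_le_sq_sub_sq_div hr hrs hB.le hBA (hB.trans_le hBA),
    sq_sub_sq_div_le_div hr hrs hB hBA⟩
end
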